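/- Fix reals ε and D with 0 < ε < 1/2 and ε·D > 2, and consider the instance with n = 2 demand levels given by v_1 = 1, v_2 = ε, d_1 = 1, d_2 = D. Then: (i) (ε/2, ε/2) is a pure Nash equilibrium with total revenue R(ε) = ε·D and welfare SW(ε) = 1 + ε·(D − 1) ≥ ε·D; (ii) (1/2, 1/2) is a pure Nash equilibrium with total revenue R(1) = 1 and welfare SW(1) = 1; (iii) for every q with ε < q < 1 − ε, the unique best response to q is 1 − q (BR(q) = {1 − q}) and (1 − q, q) is a pure Nash equilibrium of welfare and revenue 1. -/

import Mathlib

open scoped Classical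

/-- The demand function induced by an instance with `n` demand levels,
values `v` and demands `d` (indices `1,…,n`):
`demand n v d x = d i` for the largest index `i ∈ {1,…,n}` with `x ≤ v i`,
and `0` if there is no such index. -/
noncomputable def demand (n : ℕ) (v d : ℕ → ℝ) (x : ℝ) : ℝ :=
  if h : ((Finset.Icc 1 n).filter (fun i => x ≤ v i)).Nonempty then
    d (((Finset.Icc 1 n).filter (fun i => x ≤ v i)).max' h)
  else 0

/-- Total revenue at total price `x`. -/
noncomputable def rev (n : ℕ) (v d : ℕ → ℝ) (x : ℝ) : ℝ := x * demand n v d x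

/-- Social welfare at total price `x` (with the convention `d 0 = 0`). -/
noncomputable def welfare (n : ℕ) (v d : ℕ → ℝ) (x : ℝ) : ℝ :=
  ∑ i ∈ (Finset.Icc 1 n).filter (fun i => x ≤ v i),
    v i * (d i - if 1 < i then d (i - 1) else 0)

/-- `InBR n v d q p` : `p` is a best response to the price `q` of the other seller. -/
def InBR (n : ℕ) (v d : ℕ → ℝ) (q p : ℝ) : Prop :=
  0 ≤ p ∧ ∀ p', 0 ≤ p' → p' * demand n v d (p' + q) ≤ p * demand n v d (p + q)

/-- `(p, q)` is a pure Nash equilibrium. -/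
def IsNE (n : ℕ) (v d : ℕ → ℝ) (p q : ℝ) : Prop :=
  0 ≤ p ∧ 0 ≤ q ∧ InBR n v d q p ∧ InBR n v d p q

/-- A valid instance with `n ≥ 2` demand levels: positive values strictly
decreasing in the index, positive demands strictly increasing in the index. -/
def ValidInstance (n : ℕ) (v d : ℕ → ℝ) : Prop :=
  2 ≤ n ∧ 0 < v n ∧ (∀ i j, 1 ≤ i → i < j → j ≤ n → v j < v i) ∧
    0 < d 1 ∧ (∀ i j, 1 ≤ i → i < j → j ≤ n → d i < d j)

/-! With two levels the demand is `d 2` up to `v 2`, `d 1` up to `v 1`, and `0` beyond.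
Once the other price `q` exceeds `v 2`, only the first level is reachable, so the revenue
`p * d 1` is maximized exactly at `p = v 1 - q`. At `(v 2 / 2, v 2 / 2)`, a deviation into the
first level earns at most `(v 1 - v 2 / 2) * d 1`, which `ε * D > 2` makes smaller than the
`v 2 / 2 * d 2` earned by staying. -/

namespace TwoLevel

variable {v d : ℕ → ℝ} {p q : ℝ}

theorem demand_two (x : ℝ) :
    demand 2 v d x = if x ≤ v 2 then d 2 else if x ≤ v 1 then d 1 else 0 := by
  have hIcc : Finset.Icc 1 2 = {1, 2} := rfl
  simp only [demand, hIcc, Finset.filter_insert, Finset.filter_singleton]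
  split_ifs <;> first | rfl | (exfalso; simp_all)

theorem demand_two_of_lt {x : ℝ} (hx : v 2 < x) :
    demand 2 v d x = if x ≤ v 1 then d 1 else 0 := by
  rw [demand_two, if_neg hx.not_ge]

theorem welfare_two (x : ℝ) :
    welfare 2 v d x = (if x ≤ v 1 then v 1 * d 1 else 0) +
      if x ≤ v 2 then v 2 * (d 2 - d 1) else 0 := by
  rw [welfare, Finset.sum_filter, show Finset.Icc 1 2 = {1, 2} from rfl,
    Finset.sum_pair (by norm_num)]
  norm_num

theorem inBR_sub_of_lt (hd1 : 0 ≤ d 1) (hq : v 2 < q) (hq1 : q ≤ v 1) :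
    InBR 2 v d q (v 1 - q) := by
  refine ⟨sub_nonneg.2 hq1, fun p hp => ?_⟩
  rw [sub_add_cancel, demand_two_of_lt (hq.trans_le hq1), if_pos le_rfl,
    demand_two_of_lt (by linarith)]
  split_ifs with hpq
  · exact mul_le_mul_of_nonneg_right (by linarith) hd1
  · rw [mul_zero]
    exact mul_nonneg (sub_nonneg.2 hq1) hd1

theorem eq_sub_of_inBR (hd1 : 0 < d 1) (hq : v 2 < q) (hq1 : q < v 1)
    (h : InBR 2 v d q p) : p = v 1 - q := by
  obtain ⟨hp, hbest⟩ := h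
  have hcmp := hbest (v 1 - q) (by linarith)
  rw [sub_add_cancel, demand_two_of_lt (hq.trans hq1), if_pos le_rfl,
    demand_two_of_lt (by linarith)] at hcmp
  split_ifs at hcmp with hpq
  · have : v 1 - q ≤ p := le_of_mul_le_mul_right hcmp hd1
    linarith
  · rw [mul_zero] at hcmp
    nlinarith

theorem isNE_sub_of_lt (hv2 : 0 ≤ v 2) (hd1 : 0 ≤ d 1) (hq : v 2 < q) (hq1 : q < v 1 - v 2) :
    IsNE 2 v d (v 1 - q) q := by
  have hBR := inBR_sub_of_lt hd1 (q := v 1 - q) (by linarith) (by linarith)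
  rw [sub_sub_cancel] at hBR
  exact ⟨by linarith, by linarith, inBR_sub_of_lt hd1 hq (by linarith), hBR⟩

theorem isNE_half (hv2 : 0 ≤ v 2) (hd1 : 0 ≤ d 1) (hd2 : 0 ≤ d 2)
    (h : (v 1 - v 2 / 2) * d 1 ≤ v 2 / 2 * d 2) :
    IsNE 2 v d (v 2 / 2) (v 2 / 2) := by
  have hBR : InBR 2 v d (v 2 / 2) (v 2 / 2) := by
    refine ⟨by linarith, fun p hp => ?_⟩
    rw [add_halves, demand_two (v 2), if_pos le_rfl, demand_two]
    split_ifs with h2 h1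
    · exact mul_le_mul_of_nonneg_right (by linarith) hd2
    · exact (mul_le_mul_of_nonneg_right (by linarith) hd1).trans h
    · rw [mul_zero]
      exact mul_nonneg (by linarith) hd2
  exact ⟨by linarith, by linarith, hBR, hBR⟩

end TwoLevel

open TwoLevel

/-- In the instance `v₁ = 1`, `v₂ = ε`, `d₁ = 1`, `d₂ = D` with `εD > 2`:
`(ε/2, ε/2)` is an equilibrium of revenue `εD` and welfare `1 + ε(D-1) ≥ εD`;
`(1/2, 1/2)` is an equilibrium of revenue and welfare `1`; and for every
`q ∈ (ε, 1-ε)` the unique best response to `q` is `1 - q`, and `(1-q, q)` is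
an equilibrium of welfare and revenue `1`. -/
theorem stmt_10 (ε D : ℝ) (hε0 : 0 < ε) (hε : ε < 1 / 2) (hεD : 2 < ε * D)
    (v d : ℕ → ℝ) (hv1 : v 1 = 1) (hv2 : v 2 = ε)
    (hd1 : d 1 = 1) (hd2 : d 2 = D) :
    (IsNE 2 v d (ε / 2) (ε / 2) ∧ rev 2 v d ε = ε * D ∧
      welfare 2 v d ε = 1 + ε * (D - 1) ∧ ε * D ≤ welfare 2 v d ε) ∧
    (IsNE 2 v d (1 / 2) (1 / 2) ∧ rev 2 v d 1 = 1 ∧ welfare 2 v d 1 = 1) ∧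
    (∀ q : ℝ, ε < q → q < 1 - ε →
      (∀ p : ℝ, InBR 2 v d q p ↔ p = 1 - q) ∧
      IsNE 2 v d (1 - q) q ∧
      rev 2 v d ((1 - q) + q) = 1 ∧ welfare 2 v d ((1 - q) + q) = 1) := by
  subst hv2 hd2
  have hd1_pos : 0 < d 1 := hd1 ▸ one_pos
  have hrev_one : rev 2 v d 1 = 1 := by
    rw [rev, demand_two_of_lt (by linarith), hv1, if_pos le_rfl, hd1, mul_one]
  have hwelfare_one : welfare 2 v d 1 = 1 := by
    rw [welfare_two, hv1, hd1, if_pos le_rfl, if_neg (by linarith)]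
    norm_num
  have hwelfare : welfare 2 v d (v 2) = 1 + v 2 * (d 2 - 1) := by
    rw [welfare_two, hv1, hd1, if_pos (by linarith), if_pos le_rfl]
    ring
  have hNE_half : IsNE 2 v d (1 / 2) (1 / 2) := by
    have := isNE_sub_of_lt hε0.le hd1_pos.le (q := 1 / 2) hε (by linarith)
    rwa [hv1, show (1 : ℝ) - 1 / 2 = 1 / 2 by norm_num] at this
  refine ⟨⟨isNE_half hε0.le hd1_pos.le (by nlinarith) (by rw [hv1, hd1]; linarith), ?_,
    hwelfare, by rw [hwelfare]; linarith⟩, ⟨hNE_half, hrev_one, hwelfare_one⟩, ?_⟩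
  · rw [rev, demand_two, if_pos le_rfl]
  intro q hq hq'
  refine ⟨fun p => ⟨fun h => ?_, ?_⟩, ?_, by rwa [sub_add_cancel], by rwa [sub_add_cancel]⟩
  · exact hv1 ▸ eq_sub_of_inBR hd1_pos hq (by linarith) h
  · rintro rfl
    exact hv1 ▸ inBR_sub_of_lt hd1_pos.le hq (by linarith)
  · exact hv1 ▸ isNE_sub_of_lt hε0.le hd1_pos.le hq (by linarith)
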